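/- arXiv:2403.07855 — 8 statements merged into one kernel-verified Lean document; each statement's English description precedes it below -/
import Mathlib

section
/- Let w be a weight structure on a triangulated category C. Then C_{w≥0} = (C_{w≤-1})^⊥ and C_{w≤0} = ^⊥(C_{w≥1}). -/
open CategoryTheory CategoryTheory.Limits CategoryTheory.Pretriangulated ZeroObject

universe w' v u

variable (C : Type u) [Category.{v} C] [HasZeroObject C] [HasShift C ℤ]
  [Preadditive C] [∀ n : ℤ, (shiftFunctor C n).Additive] [Pretriangulated C]

/-- A t-structure `t = (C_{t≤0}, C_{t≥0})` on a triangulated category, in the homological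
convention of the paper.  `le` is the class `C_{t≤0}` and `ge` is the class `C_{t≥0}`.
The condition `C_{t≤0} ⊆ C_{t≤0}[1]` is encoded as `le X → le (X⟦-1⟧)` (the classes being
closed under isomorphism), and `C_{t≥0}[1] ⊆ C_{t≥0}` as `ge X → ge (X⟦1⟧)`.
The class `C_{t≤i} = C_{t≤0}[i]` is `fun X => le (X⟦-i⟧)` and similarly for `C_{t≥i}`. -/
structure PaperTStructure where
  /-- the class `C_{t≤0}` -/
  le : C → Prop
  /-- the class `C_{t≥0}` -/
  ge : C → Prop
  le_iso : ∀ {X Y : C}, (X ≅ Y) → le X → le Y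
  ge_iso : ∀ {X Y : C}, (X ≅ Y) → ge X → ge Y
  le_shift : ∀ X : C, le X → le (X⟦(-1 : ℤ)⟧)
  ge_shift : ∀ X : C, ge X → ge (X⟦(1 : ℤ)⟧)
  /-- `C_{t≥0}[1] ⊥ C_{t≤0}` -/
  orth : ∀ (X Y : C), ge X → le Y → ∀ f : X⟦(1 : ℤ)⟧ ⟶ Y, f = 0
  /-- every object `M` admits a `t`-decomposition `L → M → R → L[1]` with `L ∈ C_{t≥0}`,
  `R ∈ C_{t≤0}[-1]` (i.e. `R⟦1⟧ ∈ C_{t≤0}`) -/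
  decomp : ∀ M : C, ∃ (L R : C) (f : L ⟶ M) (g : M ⟶ R) (h : R ⟶ L⟦(1 : ℤ)⟧),
    (Triangle.mk f g h ∈ distTriang C) ∧ ge L ∧ le (R⟦(1 : ℤ)⟧)

/-- A weight structure `w = (C_{w≤0}, C_{w≥0})` on a triangulated category, in the homological
convention of the paper.  `le` is the class `C_{w≤0}` and `ge` is the class `C_{w≥0}`;
both are retraction-closed.  `C_{w≤i} = C_{w≤0}[i]` is `fun X => le (X⟦-i⟧)`, similarly `ge`. -/
structure PaperWeightStructure where
  /-- the class `C_{w≤0}` -/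
  le : C → Prop
  /-- the class `C_{w≥0}` -/
  ge : C → Prop
  le_retract : ∀ (X Y : C), le Y → (∃ (i : X ⟶ Y) (r : Y ⟶ X), i ≫ r = 𝟙 X) → le X
  ge_retract : ∀ (X Y : C), ge Y → (∃ (i : X ⟶ Y) (r : Y ⟶ X), i ≫ r = 𝟙 X) → ge X
  le_shift : ∀ X : C, le X → le (X⟦(-1 : ℤ)⟧)
  ge_shift : ∀ X : C, ge X → ge (X⟦(1 : ℤ)⟧)
  /-- `C_{w≤0} ⊥ C_{w≥0}[1]` -/
  orth : ∀ (X Y : C), le X → ge Y → ∀ f : X ⟶ Y⟦(1 : ℤ)⟧, f = 0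
  /-- every object `M` admits a weight decomposition `L → M → R → L[1]` with `L ∈ C_{w≤0}`,
  `R ∈ C_{w≥0}[1]` (i.e. `R⟦-1⟧ ∈ C_{w≥0}`) -/
  decomp : ∀ M : C, ∃ (L R : C) (f : L ⟶ M) (g : M ⟶ R) (h : R ⟶ L⟦(1 : ℤ)⟧),
    (Triangle.mk f g h ∈ distTriang C) ∧ le L ∧ ge (R⟦(-1 : ℤ)⟧)

/-- A class of objects is extension-closed if it contains `0` and for every distinguished
triangle `X → Y → Z → X[1]` with `X, Z` in the class, `Y` lies in the class. -/
def ExtClosed (P : C → Prop) : Prop :=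
  P (0 : C) ∧ ∀ T : Triangle C, (T ∈ distTriang C) → P T.obj₁ → P T.obj₃ → P T.obj₂

/-- A class of objects is retraction-closed if it contains all retracts of its elements. -/
def RetractClosed (P : C → Prop) : Prop :=
  ∀ X Y : C, P Y → (∃ (i : X ⟶ Y) (r : Y ⟶ X), i ≫ r = 𝟙 X) → P X

/-!
The inclusions `C_{w≥0} ⊆ (C_{w≤-1})^⊥` and `C_{w≤0} ⊆ ^⊥(C_{w≥1})` are the orthogonality
axiom up to shifts. Conversely, if `Y ∈ (C_{w≤-1})^⊥`, shift a weight decomposition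
`L → Y[1] → R` back by one: the first map of `L[-1] → Y → R[-1]` vanishes, so `Y` is a retract
of `R[-1] ∈ C_{w≥0}`. Dually, if `X ∈ ^⊥(C_{w≥1})`, the second map of a weight decomposition
`L → X → R` vanishes, so `X` is a retract of `L ∈ C_{w≤0}`.
-/

namespace CategoryTheory.Pretriangulated

variable {C}

lemma exists_retraction_mor₂_of_mor₁_eq_zero (T : Triangle C) (hT : T ∈ distTriang C)
    (h : T.mor₁ = 0) : ∃ r : T.obj₃ ⟶ T.obj₂, T.mor₂ ≫ r = 𝟙 T.obj₂ := by
  obtain ⟨r, hr⟩ := T.yoneda_exact₂ hT (𝟙 T.obj₂) (by rw [h, zero_comp])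
  exact ⟨r, hr.symm⟩

lemma exists_section_mor₁_of_mor₂_eq_zero (T : Triangle C) (hT : T ∈ distTriang C)
    (h : T.mor₂ = 0) : ∃ s : T.obj₂ ⟶ T.obj₁, s ≫ T.mor₁ = 𝟙 T.obj₂ := by
  obtain ⟨s, hs⟩ := T.coyoneda_exact₂ hT (𝟙 T.obj₂) (by rw [h, comp_zero])
  exact ⟨s, hs.symm⟩

end CategoryTheory.Pretriangulated

namespace PaperWeightStructure

variable {C} (w : PaperWeightStructure C)

lemma le_of_iso {X Y : C} (e : X ≅ Y) (hX : w.le X) : w.le Y :=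
  w.le_retract Y X hX ⟨e.inv, e.hom, e.inv_hom_id⟩

lemma ge_of_iso {X Y : C} (e : X ≅ Y) (hX : w.ge X) : w.ge Y :=
  w.ge_retract Y X hX ⟨e.inv, e.hom, e.inv_hom_id⟩

lemma hom_eq_zero_of_le_shift_of_ge {X Y : C} (hX : w.le (X⟦(1 : ℤ)⟧)) (hY : w.ge Y)
    (f : X ⟶ Y) : f = 0 :=
  (shiftFunctor C (1 : ℤ)).map_eq_zero_iff.1 (w.orth _ _ hX hY _)

lemma hom_eq_zero_of_le_of_ge_shift {X Y : C} (hX : w.le X) (hY : w.ge (Y⟦(-1 : ℤ)⟧))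
    (f : X ⟶ Y) : f = 0 :=
  (Preadditive.IsIso.comp_right_eq_zero f (shiftNegShift Y (1 : ℤ)).inv).1 (w.orth _ _ hX hY _)

lemma ge_of_forall_hom_eq_zero {Y : C}
    (h : ∀ X : C, w.le (X⟦(1 : ℤ)⟧) → ∀ f : X ⟶ Y, f = 0) : w.ge Y := by
  obtain ⟨L, R, f, g, m, hT, hL, hR⟩ := w.decomp (Y⟦(1 : ℤ)⟧)
  let T := (Triangle.shiftFunctor C (-1)).obj (Triangle.mk f g m)
  let e : T.obj₂ ≅ Y := shiftShiftNeg Y (1 : ℤ)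
  have hT₁ : w.le (T.obj₁⟦(1 : ℤ)⟧) := w.le_of_iso (shiftNegShift L (1 : ℤ)).symm hL
  have hmor₁ : T.mor₁ = 0 :=
    (Preadditive.IsIso.comp_right_eq_zero _ e.hom).1 (h _ hT₁ (T.mor₁ ≫ e.hom))
  obtain ⟨r, hr⟩ := exists_retraction_mor₂_of_mor₁_eq_zero T
    (Triangle.shift_distinguished _ hT (-1)) hmor₁
  exact w.ge_of_iso e (w.ge_retract _ _ hR ⟨T.mor₂, r, hr⟩)

lemma le_of_forall_hom_eq_zero {X : C}
    (h : ∀ Y : C, w.ge (Y⟦(-1 : ℤ)⟧) → ∀ f : X ⟶ Y, f = 0) : w.le X := by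
  obtain ⟨L, R, f, g, m, hT, hL, hR⟩ := w.decomp X
  obtain ⟨s, hs⟩ := exists_section_mor₁_of_mor₂_eq_zero _ hT (h R hR g)
  exact w.le_retract _ _ hL ⟨s, f, hs⟩

end PaperWeightStructure

/-- for a weight structure `w`, `C_{w≥0} = (C_{w≤-1})^⊥` and
`C_{w≤0} = ^⊥(C_{w≥1})`.  Here `C_{w≤-1} = {X : X⟦1⟧ ∈ C_{w≤0}}` and
`C_{w≥1} = {Y : Y⟦-1⟧ ∈ C_{w≥0}}`. -/
theorem stmt1 (w : PaperWeightStructure C) :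
    (∀ Y : C, w.ge Y ↔ ∀ X : C, w.le (X⟦(1 : ℤ)⟧) → ∀ f : X ⟶ Y, f = 0) ∧
    (∀ X : C, w.le X ↔ ∀ Y : C, w.ge (Y⟦(-1 : ℤ)⟧) → ∀ f : X ⟶ Y, f = 0) :=
  ⟨fun _ => ⟨fun hY _ hX => w.hom_eq_zero_of_le_shift_of_ge hX hY, w.ge_of_forall_hom_eq_zero⟩,
    fun _ => ⟨fun hX _ hY => w.hom_eq_zero_of_le_of_ge_shift hX hY, w.le_of_forall_hom_eq_zero⟩⟩
end

section
/- Let w be a weight structure on a triangulated category C, let m ≤ n be integers, let M, M' be objects and g : M → M' a morphism. For any fixed m-weight decomposition of M and n-weight decomposition of M', g extends to a morphism of the corresponding distinguished triangles. Moreover, if m < n this extension is unique. -/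
open CategoryTheory CategoryTheory.Limits CategoryTheory.Pretriangulated ZeroObject

universe w' v u

variable (C : Type u) [Category.{v} C] [HasZeroObject C] [HasShift C ℤ]
  [Preadditive C] [∀ n : ℤ, (shiftFunctor C n).Additive] [Pretriangulated C]

namespace PaperWeightStructure

variable {C}

lemma le_iso (w : PaperWeightStructure C) {X Y : C} (e : X ≅ Y) (h : w.le X) : w.le Y :=
  w.le_retract Y X h ⟨e.inv, e.hom, e.inv_hom_id⟩

lemma ge_iso (w : PaperWeightStructure C) {X Y : C} (e : X ≅ Y) (h : w.ge X) : w.ge Y :=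
  w.ge_retract Y X h ⟨e.inv, e.hom, e.inv_hom_id⟩

lemma ge_shift_nonneg (w : PaperWeightStructure C) (Z : C) (h : w.ge Z) :
    ∀ k : ℤ, 0 ≤ k → w.ge (Z⟦k⟧) := by
  intro k hk
  refine Int.le_induction (motive := fun k _ => w.ge (Z⟦k⟧)) ?_ ?_ k hk
  · exact w.ge_iso ((shiftFunctorZero C ℤ).symm.app Z) h
  · intro k _ ih
    exact w.ge_iso ((shiftFunctorAdd C k (1 : ℤ)).symm.app Z) (w.ge_shift _ ih)

/-- key orthogonality: `Hom(C_{w≤a}, C_{w≥b}) = 0` when `a < b`. -/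
lemma key (w : PaperWeightStructure C) (a b : ℤ) (hab : a + 1 ≤ b) {X Y : C}
    (hX : w.le (X⟦(-a : ℤ)⟧)) (hY : w.ge (Y⟦(-b : ℤ)⟧)) (φ : X ⟶ Y) : φ = 0 := by
  have h1 : w.ge ((Y⟦(-b : ℤ)⟧)⟦(b - a - 1 : ℤ)⟧) :=
    w.ge_shift_nonneg _ hY _ (by omega)
  have h2 : w.ge (Y⟦(-a - 1 : ℤ)⟧) :=
    w.ge_iso ((shiftFunctorAdd' C (-b) (b - a - 1) (-a - 1) (by ring)).symm.app Y) h1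
  have e : Y⟦(-a : ℤ)⟧ ≅ (Y⟦(-a - 1 : ℤ)⟧)⟦(1 : ℤ)⟧ :=
    (shiftFunctorAdd' C (-a - 1) (1 : ℤ) (-a) (by ring)).app Y
  have h3 : ((shiftFunctor C (-a : ℤ)).map φ) ≫ e.hom = 0 := w.orth _ _ hX h2 _
  apply (shiftFunctor C (-a : ℤ)).map_injective
  rw [Functor.map_zero, ← Category.comp_id ((shiftFunctor C (-a : ℤ)).map φ),
    ← e.hom_inv_id, ← Category.assoc, h3, Limits.zero_comp]

end PaperWeightStructure

/-- given `m ≤ n`, a morphism `g : M ⟶ M'`, an `m`-weight decomposition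
`A → M → B → A[1]` of `M` (so `A ∈ C_{w≤m}`, `B ∈ C_{w≥m+1}`) and an `n`-weight
decomposition `A' → M' → B' → A'[1]` of `M'`, the morphism `g` extends to a morphism of the
corresponding distinguished triangles; moreover, if `m < n` this extension is unique. -/
theorem stmt5 (w : PaperWeightStructure C) (m n : ℤ) (hmn : m ≤ n)
    {M M' A B A' B' : C} (g : M ⟶ M')
    (f : A ⟶ M) (s : M ⟶ B) (d : B ⟶ A⟦(1 : ℤ)⟧)
    (f' : A' ⟶ M') (s' : M' ⟶ B') (d' : B' ⟶ A'⟦(1 : ℤ)⟧)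
    (hT : Triangle.mk f s d ∈ distTriang C) (hT' : Triangle.mk f' s' d' ∈ distTriang C)
    (hA : w.le (A⟦(-m : ℤ)⟧)) (hB : w.ge (B⟦(-(m + 1) : ℤ)⟧))
    (hA' : w.le (A'⟦(-n : ℤ)⟧)) (hB' : w.ge (B'⟦(-(n + 1) : ℤ)⟧)) :
    (∃ (h : A ⟶ A') (j : B ⟶ B'), h ≫ f' = f ≫ g ∧ s ≫ j = g ≫ s') ∧
    (m < n → ∀ (h₁ h₂ : A ⟶ A') (j₁ j₂ : B ⟶ B'),
      h₁ ≫ f' = f ≫ g → s ≫ j₁ = g ≫ s' →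
      h₂ ≫ f' = f ≫ g → s ≫ j₂ = g ≫ s' → h₁ = h₂ ∧ j₁ = j₂) := by
  constructor
  · have hz : (f ≫ g) ≫ s' = 0 := by
      rw [Category.assoc]
      have : g ≫ s' = 0 ∨ True := Or.inr trivial
      have h0 : f ≫ (g ≫ s') = 0 := by
        have := w.key m (n+1) (by omega) hA hB' (f ≫ g ≫ s')
        simpa using this
      exact h0
    obtain ⟨h, hh⟩ := Triangle.coyoneda_exact₂ _ hT' (f ≫ g) hz
    obtain ⟨j, hj₁, hj₂⟩ := complete_distinguished_triangle_morphism
      (Triangle.mk f s d) (Triangle.mk f' s' d') hT hT' h g hh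
    exact ⟨h, j, hh.symm, hj₁⟩
  · intro hlt h₁ h₂ j₁ j₂ e₁ e₂ e₃ e₄
    have hh : h₁ = h₂ := by
      have hz : (h₁ - h₂) ≫ f' = 0 := by
        rw [Preadditive.sub_comp, e₁, e₃, sub_self]
      obtain ⟨y, hy⟩ := Triangle.coyoneda_exact₂ _ (inv_rot_of_distTriang _ hT')
        (h₁ - h₂) hz
      have hy0 : y = 0 := by
        refine w.key m n (by omega) hA ?_ y
        exact w.ge_iso ((shiftFunctorAdd' C (-1 : ℤ) (-n) (-(n+1)) (by ring)).app B') hB'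
      rw [hy0, Limits.zero_comp] at hy
      exact sub_eq_zero.mp hy
    refine ⟨hh, ?_⟩
    have hz : s ≫ (j₁ - j₂) = 0 := by
      rw [Preadditive.comp_sub, e₂, e₄, sub_self]
    obtain ⟨y, hy⟩ := Triangle.yoneda_exact₃ _ hT (j₁ - j₂) hz
    have hy0 : y = 0 := by
      refine w.key (m+1) (n+1) (by omega) ?_ hB' y
      exact w.le_iso ((shiftFunctorAdd' C (1 : ℤ) (-(m+1)) (-m) (by ring)).app A) hA
    rw [hy0, Limits.comp_zero] at hy
    exact sub_eq_zero.mp hy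
end

section
/- Let v and w be weight structures on the same triangulated category C with C_{w≤0} ⊆ C_{v≤0} and C_{w≥0} ⊆ C_{v≥0}. Then w = v, i.e., both inclusions are equalities. -/
open CategoryTheory CategoryTheory.Limits CategoryTheory.Pretriangulated ZeroObject

universe w' v u

variable (C : Type u) [Category.{v} C] [HasZeroObject C] [HasShift C ℤ]
  [Preadditive C] [∀ n : ℤ, (shiftFunctor C n).Additive] [Pretriangulated C]

/-! Each half of a weight structure is determined by the other as its orthogonal:
`X ∈ C_{w≤0}` as soon as `X ⊥ C_{w≥0}[1]`, because the weight decomposition of `X` then has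
zero second map, which makes `X` a retract of its `C_{w≤0}`-part; dually for `C_{w≥0}`.
Enlarging both halves shrinks both orthogonals, so `v` and `w` must coincide. -/

attribute [ext] PaperWeightStructure

section

variable {C}

noncomputable def CategoryTheory.Pretriangulated.retractObj₁OfMor₂EqZero {T : Triangle C}
    (hT : T ∈ distTriang C) (h : T.mor₂ = 0) : Retract T.obj₂ T.obj₁ where
  i := (Triangle.coyoneda_exact₂ T hT (𝟙 T.obj₂) (by simp [h])).choose
  r := T.mor₁
  retract := (Triangle.coyoneda_exact₂ T hT (𝟙 T.obj₂) (by simp [h])).choose_spec.symm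

noncomputable def CategoryTheory.Pretriangulated.retractObj₃OfMor₁EqZero {T : Triangle C}
    (hT : T ∈ distTriang C) (h : T.mor₁ = 0) : Retract T.obj₂ T.obj₃ where
  i := T.mor₂
  r := (Triangle.yoneda_exact₂ T hT (𝟙 T.obj₂) (by simp [h])).choose
  retract := (Triangle.yoneda_exact₂ T hT (𝟙 T.obj₂) (by simp [h])).choose_spec.symm

namespace PaperWeightStructure

variable (w : PaperWeightStructure C) {X : C}

lemma le_of_retract {Y : C} (e : Retract X Y) (hY : w.le Y) : w.le X :=
  w.le_retract X Y hY ⟨e.i, e.r, e.retract⟩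

lemma ge_of_retract {Y : C} (e : Retract X Y) (hY : w.ge Y) : w.ge X :=
  w.ge_retract X Y hY ⟨e.i, e.r, e.retract⟩

lemma le_of_forall_hom_shift_eq_zero
    (hX : ∀ Y : C, w.ge Y → ∀ f : X ⟶ Y⟦(1 : ℤ)⟧, f = 0) : w.le X := by
  obtain ⟨L, R, f, g, _, hT, hL, hR⟩ := w.decomp X
  let e : R ≅ (R⟦(-1 : ℤ)⟧)⟦(1 : ℤ)⟧ :=
    ((shiftFunctorCompIsoId C (-1 : ℤ) 1 (by norm_num)).app R).symm
  have hg : g = 0 := (cancel_mono e.hom).1 (by simpa using hX _ hR (g ≫ e.hom))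
  exact w.le_of_retract (retractObj₁OfMor₂EqZero hT hg) hL

lemma ge_of_forall_hom_shift_eq_zero
    (hX : ∀ Y : C, w.le Y → ∀ f : Y ⟶ X⟦(1 : ℤ)⟧, f = 0) : w.ge X := by
  obtain ⟨L, R, f, g, _, hT, hL, hR⟩ := w.decomp (X⟦(1 : ℤ)⟧)
  have hf : f = 0 := hX L hL f
  let e : X ≅ (X⟦(1 : ℤ)⟧)⟦(-1 : ℤ)⟧ :=
    ((shiftFunctorCompIsoId C (1 : ℤ) (-1) (by norm_num)).app X).symm
  exact w.ge_of_retract ((Retract.ofIso e).trans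
    ((retractObj₃OfMor₁EqZero hT hf).map (shiftFunctor C (-1 : ℤ)))) hR

end PaperWeightStructure

end

/-- if `v` and `w` are weight structures on the same triangulated category with
`C_{w≤0} ⊆ C_{v≤0}` and `C_{w≥0} ⊆ C_{v≥0}`, then `w = v`. -/
theorem stmt6 (v w : PaperWeightStructure C)
    (h1 : ∀ X : C, w.le X → v.le X) (h2 : ∀ X : C, w.ge X → v.ge X) :
    w = v := by
  have hle (X : C) (hX : v.le X) : w.le X :=
    w.le_of_forall_hom_shift_eq_zero fun Y hY => v.orth X Y hX (h2 Y hY)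
  have hge (X : C) (hX : v.ge X) : w.ge X :=
    w.ge_of_forall_hom_shift_eq_zero fun Y hY => v.orth Y X (h1 Y hY) hX
  ext X
  · exact ⟨h1 X, hle X⟩
  · exact ⟨h2 X, hge X⟩
end

section
/- Let (C₁, C₂) be a pair of subclasses of objects of a triangulated category C. Then (C₁, C₂) is a t-structure with C₁[1] = C₁ (where C₁ plays the role of C_{t≤0}) if and only if (C₂, C₁) is a weight structure with C₁[1] = C₁ (where C₂ = C_{w≤0}, C₁ = C_{w≥0}). -/
open CategoryTheory CategoryTheory.Limits CategoryTheory.Pretriangulated ZeroObject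

universe w' v u

variable (C : Type u) [Category.{v} C] [HasZeroObject C] [HasShift C ℤ]
  [Preadditive C] [∀ n : ℤ, (shiftFunctor C n).Additive] [Pretriangulated C]

/-! If `C₁` is stable under shifts in both directions, the t-structure axioms for `(C₁, C₂)` and
the weight-structure axioms for `(C₂, C₁)` both come down to `Hom(C₂, C₁) = 0` together with
triangles `L → M → R → L[1]` with `L ∈ C₂`, `R ∈ C₁`. Such triangles force `C₂ = ⊥C₁` and
`C₁ = C₂⊥`: for `M ∈ ⊥C₁` the map `M → R` vanishes, so `𝟙_R` factors through `L[1] → R`, which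
vanishes as `L[1] ∈ ⊥C₁`; dually for `C₂⊥`. Orthogonals are retract-closed, and `⊥C₁` inherits
the shift-stability of `C₁`; this supplies the remaining axioms on either side. -/

namespace CategoryTheory.ObjectProperty

section

variable {D : Type*} [Category D]

lemma isStableUnderShift_of_shift_one_iff [HasShift D ℤ] (P : ObjectProperty D)
    [P.IsClosedUnderIsomorphisms] (h : ∀ X : D, P (X⟦(1 : ℤ)⟧) ↔ P X) :
    P.IsStableUnderShift ℤ := by
  have key : ∀ (n : ℤ) (X : D), P (X⟦n⟧) ↔ P X := by
    intro n X
    induction n using Int.induction_on with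
    | zero => exact P.prop_iff_of_iso ((shiftFunctorZero D ℤ).app X)
    | succ n ih =>
      exact (P.prop_iff_of_iso ((shiftFunctorAdd' D (n : ℤ) 1 (n + 1) rfl).app X)).trans
        ((h _).trans ih)
    | pred n ih =>
      have e := (shiftFunctorAdd' D (-(n : ℤ) - 1) 1 (-n) (by omega)).app X
      exact (h _).symm.trans ((P.prop_iff_of_iso e).symm.trans ih)
  exact ⟨fun n => ⟨fun X hX => (key n X).2 hX⟩⟩

variable [Preadditive D] (P Q : ObjectProperty D)

instance : P.leftOrthogonal.IsStableUnderRetracts where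
  of_retract e hY Z f hZ := by
    rw [← Category.id_comp f, ← e.retract, Category.assoc, hY (e.r ≫ f) hZ, comp_zero]

instance : P.rightOrthogonal.IsStableUnderRetracts where
  of_retract e hY Z f hZ := by
    rw [← Category.comp_id f, ← e.retract, ← Category.assoc, hY (f ≫ e.i) hZ, zero_comp]

lemma le_leftOrthogonal_iff : P ≤ Q.leftOrthogonal ↔ Q ≤ P.rightOrthogonal :=
  ⟨fun h _ hY _ f hX => h _ hX f hY, fun h _ hX _ f hY => h _ hY f hX⟩

end

section

variable {C} {A B : ObjectProperty C} [B.IsStableUnderShift ℤ]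

lemma leftOrthogonal_eq_of_distTriang [A.IsClosedUnderIsomorphisms]
    (hAB : A ≤ B.leftOrthogonal)
    (hdec : ∀ M : C, ∃ (L R : C) (f : L ⟶ M) (g : M ⟶ R) (h : R ⟶ L⟦(1 : ℤ)⟧),
      Triangle.mk f g h ∈ distTriang C ∧ A L ∧ B R) :
    B.leftOrthogonal = A := by
  refine le_antisymm (fun X hX => ?_) hAB
  obtain ⟨L, R, f, g, h, hT, hL, hR⟩ := hdec X
  have hL₁ : B.leftOrthogonal (L⟦(1 : ℤ)⟧) := B.leftOrthogonal.le_shift 1 _ (hAB _ hL)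
  obtain ⟨ψ, hψ⟩ := Triangle.yoneda_exact₃ _ hT (𝟙 R) ((Category.comp_id g).trans (hX g hR))
  have hR₀ : IsZero R := by
    rw [IsZero.iff_id_eq_zero, hψ, hL₁ ψ hR]
    exact comp_zero
  have : IsIso f := (Triangle.isZero₃_iff_isIso₁ _ hT).1 hR₀
  exact A.prop_of_isIso f hL

lemma rightOrthogonal_eq_of_distTriang [B.IsClosedUnderIsomorphisms]
    (hAB : A ≤ B.leftOrthogonal)
    (hdec : ∀ M : C, ∃ (L R : C) (f : L ⟶ M) (g : M ⟶ R) (h : R ⟶ L⟦(1 : ℤ)⟧),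
      Triangle.mk f g h ∈ distTriang C ∧ A L ∧ B R) :
    A.rightOrthogonal = B := by
  refine le_antisymm (fun Y hY => ?_) ((le_leftOrthogonal_iff A B).1 hAB)
  obtain ⟨L, R, f, g, h, hT, hL, hR⟩ := hdec Y
  have hL₁ : B.leftOrthogonal (L⟦(1 : ℤ)⟧) := B.leftOrthogonal.le_shift 1 _ (hAB _ hL)
  obtain ⟨ψ, hψ⟩ := Triangle.coyoneda_exact₁ _ hT (𝟙 (L⟦(1 : ℤ)⟧))
    ((Category.id_comp _).trans
      (((shiftFunctor C (1 : ℤ)).congr_map (hY f hL)).trans (Functor.map_zero _ _ _)))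
  have hL₀ : IsZero L := by
    have : IsZero (L⟦(1 : ℤ)⟧) := by
      rw [IsZero.iff_id_eq_zero, hψ, hL₁ ψ hR]
      exact zero_comp
    exact ((shiftFunctor C (-1 : ℤ)).map_isZero this).of_iso (shiftShiftNeg L (1 : ℤ)).symm
  have : IsIso g := (Triangle.isZero₁_iff_isIso₂ _ hT).1 hL₀
  exact B.prop_of_isIso (inv g) hR

end

end CategoryTheory.ObjectProperty

open ObjectProperty

namespace PaperTStructure

variable {C} (t : PaperTStructure C)

instance : IsClosedUnderIsomorphisms t.le := ⟨t.le_iso⟩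

instance : IsClosedUnderIsomorphisms t.ge := ⟨t.ge_iso⟩

variable {t}

lemma ge_le_leftOrthogonal_le (ht : ∀ X : C, t.le (X⟦(1 : ℤ)⟧) ↔ t.le X) :
    t.ge ≤ leftOrthogonal t.le := by
  have := isStableUnderShift_of_shift_one_iff t.le ht
  intro X hX
  exact (prop_shift_iff_of_isStableUnderShift (leftOrthogonal t.le) X (1 : ℤ)).1
    (fun Y f hY => t.orth X Y hX hY f)

lemma exists_distTriang (ht : ∀ X : C, t.le (X⟦(1 : ℤ)⟧) ↔ t.le X) (M : C) :
    ∃ (L R : C) (f : L ⟶ M) (g : M ⟶ R) (h : R ⟶ L⟦(1 : ℤ)⟧),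
      Triangle.mk f g h ∈ distTriang C ∧ t.ge L ∧ t.le R := by
  obtain ⟨L, R, f, g, h, hT, hL, hR⟩ := t.decomp M
  exact ⟨L, R, f, g, h, hT, hL, (ht R).1 hR⟩

lemma leftOrthogonal_le_eq_ge (ht : ∀ X : C, t.le (X⟦(1 : ℤ)⟧) ↔ t.le X) :
    leftOrthogonal t.le = t.ge :=
  have := isStableUnderShift_of_shift_one_iff t.le ht
  leftOrthogonal_eq_of_distTriang (ge_le_leftOrthogonal_le ht) (exists_distTriang ht)

lemma rightOrthogonal_ge_eq_le (ht : ∀ X : C, t.le (X⟦(1 : ℤ)⟧) ↔ t.le X) :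
    rightOrthogonal t.ge = t.le :=
  have := isStableUnderShift_of_shift_one_iff t.le ht
  rightOrthogonal_eq_of_distTriang (ge_le_leftOrthogonal_le ht) (exists_distTriang ht)

def toPaperWeightStructure (ht : ∀ X : C, t.le (X⟦(1 : ℤ)⟧) ↔ t.le X) :
    PaperWeightStructure C where
  le := t.ge
  ge := t.le
  le_retract X Y hY := fun ⟨i, r, hir⟩ => by
    rw [← leftOrthogonal_le_eq_ge ht] at hY ⊢
    exact prop_of_retract _ ⟨i, r, hir⟩ hY
  ge_retract X Y hY := fun ⟨i, r, hir⟩ => by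
    rw [← rightOrthogonal_ge_eq_le ht] at hY ⊢
    exact prop_of_retract _ ⟨i, r, hir⟩ hY
  le_shift X hX := by
    have := isStableUnderShift_of_shift_one_iff t.le ht
    rw [← leftOrthogonal_le_eq_ge ht] at hX ⊢
    exact ObjectProperty.le_shift (leftOrthogonal t.le) (-1) X hX
  ge_shift X := (ht X).2
  orth X Y hX hY f := ge_le_leftOrthogonal_le ht X hX f ((ht Y).2 hY)
  decomp M := by
    have := isStableUnderShift_of_shift_one_iff t.le ht
    obtain ⟨L, R, f, g, h, hT, hL, hR⟩ := exists_distTriang ht M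
    exact ⟨L, R, f, g, h, hT, hL, ObjectProperty.le_shift t.le (-1) R hR⟩

end PaperTStructure

namespace PaperWeightStructure

variable {C} (w : PaperWeightStructure C)

instance : IsStableUnderRetracts w.le := ⟨fun e h => w.le_retract _ _ h ⟨e.i, e.r, e.retract⟩⟩

instance : IsStableUnderRetracts w.ge := ⟨fun e h => w.ge_retract _ _ h ⟨e.i, e.r, e.retract⟩⟩

variable {w}

lemma le_le_leftOrthogonal_ge (hw : ∀ X : C, w.ge (X⟦(1 : ℤ)⟧) ↔ w.ge X) :
    w.le ≤ leftOrthogonal w.ge := by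
  have := isStableUnderShift_of_shift_one_iff w.ge hw
  refine (le_leftOrthogonal_iff _ _).2 fun Y hY => ?_
  exact (prop_iff_of_iso (rightOrthogonal w.le) (shiftNegShift Y (1 : ℤ))).1
    (fun X f hX => w.orth X _ hX (ObjectProperty.le_shift w.ge (-1) Y hY) f)

lemma exists_distTriang (hw : ∀ X : C, w.ge (X⟦(1 : ℤ)⟧) ↔ w.ge X) (M : C) :
    ∃ (L R : C) (f : L ⟶ M) (g : M ⟶ R) (h : R ⟶ L⟦(1 : ℤ)⟧),
      Triangle.mk f g h ∈ distTriang C ∧ w.le L ∧ w.ge R := by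
  have := isStableUnderShift_of_shift_one_iff w.ge hw
  obtain ⟨L, R, f, g, h, hT, hL, hR⟩ := w.decomp M
  exact ⟨L, R, f, g, h, hT, hL, (prop_shift_iff_of_isStableUnderShift w.ge R (-1)).1 hR⟩

lemma leftOrthogonal_ge_eq_le (hw : ∀ X : C, w.ge (X⟦(1 : ℤ)⟧) ↔ w.ge X) :
    leftOrthogonal w.ge = w.le :=
  have := isStableUnderShift_of_shift_one_iff w.ge hw
  leftOrthogonal_eq_of_distTriang (le_le_leftOrthogonal_ge hw) (exists_distTriang hw)

def toPaperTStructure (hw : ∀ X : C, w.ge (X⟦(1 : ℤ)⟧) ↔ w.ge X) : PaperTStructure C where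
  le := w.ge
  ge := w.le
  le_iso e := prop_of_iso w.ge e
  ge_iso e := prop_of_iso w.le e
  le_shift X := (hw _).1 ∘ prop_of_iso w.ge (shiftNegShift X (1 : ℤ)).symm
  ge_shift X hX := by
    have := isStableUnderShift_of_shift_one_iff w.ge hw
    rw [← leftOrthogonal_ge_eq_le hw] at hX ⊢
    exact ObjectProperty.le_shift (leftOrthogonal w.ge) 1 X hX
  orth X Y hX hY f := by
    have := isStableUnderShift_of_shift_one_iff w.ge hw
    exact ObjectProperty.le_shift (leftOrthogonal w.ge) 1 X (le_le_leftOrthogonal_ge hw X hX) f hY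
  decomp M := by
    obtain ⟨L, R, f, g, h, hT, hL, hR⟩ := exists_distTriang hw M
    exact ⟨L, R, f, g, h, hT, hL, (hw R).2 hR⟩

end PaperWeightStructure

/-- for classes `C₁, C₂` of objects, `(C₁, C₂)` is a t-structure with
`C₁[1] = C₁` (with `C₁` playing the role of `C_{t≤0}` and `C₂` of `C_{t≥0}`) if and only if
`(C₂, C₁)` is a weight structure with `C₁[1] = C₁` (with `C₂ = C_{w≤0}`, `C₁ = C_{w≥0}`). -/
theorem stmt9 (C₁ C₂ : C → Prop) :
    ((∃ t : PaperTStructure C, t.le = C₁ ∧ t.ge = C₂) ∧ (∀ X : C, C₁ (X⟦(1 : ℤ)⟧) ↔ C₁ X)) ↔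
    ((∃ w : PaperWeightStructure C, w.le = C₂ ∧ w.ge = C₁) ∧
      (∀ X : C, C₁ (X⟦(1 : ℤ)⟧) ↔ C₁ X)) := by
  constructor
  · rintro ⟨⟨t, rfl, rfl⟩, ht⟩
    exact ⟨⟨t.toPaperWeightStructure ht, rfl, rfl⟩, ht⟩
  · rintro ⟨⟨w, rfl, rfl⟩, hw⟩
    exact ⟨⟨w.toPaperTStructure hw, rfl, rfl⟩, hw⟩
end

section
/- Let w be a weight structure with zero heart on a triangulated category C. Then weight decompositions are unique up to isomorphism: for any object M, any two weight decomposition triangles of M are isomorphic. Conversely, if all weight decomposition triangles of each object are determined up to isomorphism, then the heart of w is zero. -/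
open CategoryTheory CategoryTheory.Limits CategoryTheory.Pretriangulated ZeroObject

universe w' v u

variable (C : Type u) [Category.{v} C] [HasZeroObject C] [HasShift C ℤ]
  [Preadditive C] [∀ n : ℤ, (shiftFunctor C n).Additive] [Pretriangulated C]

/-- `L → M → R → L[1]` is a weight decomposition of `M`:
distinguished, `L ∈ C_{w≤0}`, `R ∈ C_{w≥0}[1]`. -/
def IsWeightDecomp (w : PaperWeightStructure C) (M L R : C)
    (f : L ⟶ M) (g : M ⟶ R) (h : R ⟶ L⟦(1 : ℤ)⟧) : Prop :=
  (Triangle.mk f g h ∈ distTriang C) ∧ w.le L ∧ w.ge (R⟦(-1 : ℤ)⟧)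

/-! A zero heart forces `Hom(C_{w≤0}, C_{w≥0}) = 0`: in a weight decomposition `L → X[1] → R`
of `X[1]` with `X ∈ C_{w≤0}`, the object `R[-1]` is an extension of `L` by `X`, hence lies in the
heart, so `R = 0`, `L ≅ X[1]`, and every map `X[1] → Y[1]` with `Y ∈ C_{w≥0}` vanishes by
orthogonality.
Given two weight decompositions of `M`, orthogonality factors each `L → M` through the other, and
the vanishing of `Hom(L, R[-1])` makes `L → M` cancellable on the left, so the two factorisations
are mutually inverse. Conversely, a heart object `X` gives the weight decomposition
`X → 0 → X[1]` of `0`, which must be isomorphic to the zero one. -/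

namespace PaperWeightStructure

variable {C} (w : PaperWeightStructure C)

lemma le_of_isZero {X : C} (hX : IsZero X) : w.le X := by
  obtain ⟨L, -, -, -, -, -, hL, -⟩ := w.decomp X
  exact w.le_retract X L hL ⟨0, 0, hX.eq_of_src _ _⟩

lemma ge_of_isZero {X : C} (hX : IsZero X) : w.ge X := by
  obtain ⟨-, R, -, -, -, -, -, hR⟩ := w.decomp X
  exact w.ge_retract X _ hR ⟨0, 0, hX.eq_of_src _ _⟩

lemma le_obj₂_of_distTriang {T : Triangle C} (hT : T ∈ distTriang C)
    (h₁ : w.le T.obj₁) (h₃ : w.le T.obj₃) : w.le T.obj₂ := by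
  obtain ⟨L, R, a, b, c, hd, hL, hR⟩ := w.decomp T.obj₂
  obtain ⟨v, hv⟩ := Triangle.yoneda_exact₂ T hT b (w.hom_eq_zero_of_le_of_ge_shift h₁ hR _)
  have hb : b = 0 := by rw [hv, w.hom_eq_zero_of_le_of_ge_shift h₃ hR v, comp_zero]
  obtain ⟨s, hs⟩ :=
    Triangle.coyoneda_exact₂ _ hd (𝟙 T.obj₂) ((Category.id_comp b).trans hb)
  exact w.le_retract T.obj₂ L hL ⟨s, a, hs.symm⟩

variable {w}

lemma hom_eq_zero_of_le_of_ge (hheart : ∀ X : C, w.le X → w.ge X → IsZero X)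
    {X Y : C} (hX : w.le X) (hY : w.ge Y) (f : X ⟶ Y) : f = 0 := by
  obtain ⟨L, R, a, b, c, hd, hL, hR⟩ := w.decomp (X⟦(1 : ℤ)⟧)
  have hRle : w.le (R⟦(-1 : ℤ)⟧) :=
    w.le_obj₂_of_distTriang (Triangle.shift_distinguished _ (rot_of_distTriang _ hd) (-1))
      (w.le_of_iso ((shiftEquiv C (1 : ℤ)).unitIso.app X) hX)
      (w.le_of_iso ((shiftEquiv C (1 : ℤ)).unitIso.app L) hL)
  have hRzero : IsZero R :=
    ((shiftFunctor C (1 : ℤ)).map_isZero (hheart _ hRle hR)).of_iso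
      ((shiftEquiv C (1 : ℤ)).counitIso.app R).symm
  have : IsIso a := (Triangle.isZero₃_iff_isIso₁ _ hd).1 hRzero
  have hf : a ≫ f⟦(1 : ℤ)⟧' = 0 := w.orth L Y hL hY _
  apply (shiftFunctor C (1 : ℤ)).map_injective
  rw [← cancel_epi a, hf, Functor.map_zero, comp_zero]

variable (w)

lemma exists_comp_eq_of_isWeightDecomp {M L R L' R' : C} {f : L ⟶ M} {g : M ⟶ R}
    {h : R ⟶ L⟦(1 : ℤ)⟧} {f' : L' ⟶ M} {g' : M ⟶ R'} {h' : R' ⟶ L'⟦(1 : ℤ)⟧}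
    (hd : IsWeightDecomp C w M L R f g h) (hd' : IsWeightDecomp C w M L' R' f' g' h') :
    ∃ a : L ⟶ L', a ≫ f' = f := by
  obtain ⟨a, ha⟩ := Triangle.coyoneda_exact₂ _ hd'.1 f
    (w.hom_eq_zero_of_le_of_ge_shift hd.2.1 hd'.2.2 _)
  exact ⟨a, ha.symm⟩

variable {w}

lemma eq_of_comp_eq_of_isWeightDecomp (hheart : ∀ X : C, w.le X → w.ge X → IsZero X)
    {M L R : C} {f : L ⟶ M} {g : M ⟶ R} {h : R ⟶ L⟦(1 : ℤ)⟧}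
    (hd : IsWeightDecomp C w M L R f g h) {X : C} (hX : w.le X) {u v : X ⟶ L}
    (huv : u ≫ f = v ≫ f) : u = v := by
  rw [← sub_eq_zero]
  obtain ⟨p, hp⟩ :=
    Triangle.coyoneda_exact₂ (Triangle.mk f g h).invRotate (inv_rot_of_distTriang _ hd.1)
      (u - v) (show (u - v) ≫ f = 0 by rw [Preadditive.sub_comp, huv, sub_self])
  rw [hp, hom_eq_zero_of_le_of_ge hheart hX hd.2.2 p]
  exact zero_comp

lemma nonempty_iso_of_isWeightDecomp (hheart : ∀ X : C, w.le X → w.ge X → IsZero X)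
    {M L R L' R' : C} {f : L ⟶ M} {g : M ⟶ R}
    {h : R ⟶ L⟦(1 : ℤ)⟧} {f' : L' ⟶ M} {g' : M ⟶ R'} {h' : R' ⟶ L'⟦(1 : ℤ)⟧}
    (hd : IsWeightDecomp C w M L R f g h) (hd' : IsWeightDecomp C w M L' R' f' g' h') :
    Nonempty (Triangle.mk f g h ≅ Triangle.mk f' g' h') := by
  obtain ⟨a, ha⟩ := w.exists_comp_eq_of_isWeightDecomp hd hd'
  obtain ⟨a', ha'⟩ := w.exists_comp_eq_of_isWeightDecomp hd' hd
  let e : L ≅ L' :=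
    { hom := a
      inv := a'
      hom_inv_id := eq_of_comp_eq_of_isWeightDecomp hheart hd hd.2.1 (by simp [ha, ha'])
      inv_hom_id := eq_of_comp_eq_of_isWeightDecomp hheart hd' hd'.2.1 (by simp [ha, ha']) }
  exact ⟨isoTriangleOfIso₁₂ _ _ hd.1 hd'.1 e (Iso.refl M)
    ((Category.comp_id f).trans ha.symm)⟩

variable (w)

lemma isWeightDecomp_zero : IsWeightDecomp C w 0 0 0 0 0 0 := by
  refine ⟨?_, w.le_of_isZero (isZero_zero C),
    w.ge_of_isZero ((shiftFunctor C (-1 : ℤ)).map_isZero (isZero_zero C))⟩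
  simpa [contractibleTriangle, id_zero] using contractible_distinguished (0 : C)

lemma isWeightDecomp_zero_of_le_of_ge {X : C} (hle : w.le X) (hge : w.ge X) :
    IsWeightDecomp C w 0 X (X⟦(1 : ℤ)⟧) 0 0 (-(𝟙 X)⟦(1 : ℤ)⟧') :=
  ⟨rot_of_distTriang _ (contractible_distinguished X), hle,
    w.ge_of_iso ((shiftEquiv C (1 : ℤ)).unitIso.app X) hge⟩

end PaperWeightStructure

/-- the heart of a weight structure `w` is zero if and only if weight
decompositions are unique up to isomorphism (any two weight decomposition triangles of any
object `M` are isomorphic as triangles). -/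
theorem stmt10 (w : PaperWeightStructure C) :
    (∀ X : C, w.le X → w.ge X → IsZero X) ↔
    (∀ (M L R L' R' : C) (f : L ⟶ M) (g : M ⟶ R) (h : R ⟶ L⟦(1 : ℤ)⟧)
      (f' : L' ⟶ M) (g' : M ⟶ R') (h' : R' ⟶ L'⟦(1 : ℤ)⟧),
      IsWeightDecomp C w M L R f g h → IsWeightDecomp C w M L' R' f' g' h' →
      Nonempty (Triangle.mk f g h ≅ Triangle.mk f' g' h')) := by
  refine ⟨fun hheart _ _ _ _ _ _ _ _ _ _ _ hd hd' =>
    PaperWeightStructure.nonempty_iso_of_isWeightDecomp hheart hd hd', fun huniq X hle hge => ?_⟩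
  obtain ⟨e⟩ := huniq _ _ _ _ _ _ _ _ _ _ _
    (w.isWeightDecomp_zero_of_le_of_ge hle hge) w.isWeightDecomp_zero
  exact (isZero_zero C).of_iso (Triangle.π₁.mapIso e)
end

section
/- Let C', C be full triangulated subcategories of a triangulated category D, w a weight structure on C, and set C₁ = (C_{w≤-1})^{⊥_D} ∩ Obj C', C₂ = (C_{w≥0})^{⊥_D} ∩ Obj C'. If C₁ ⊥ C₂ and a t-structure t on C' is orthogonal to w (i.e., C_{w≤0} ⊥_D C'_{t≥1} and C_{w≥0} ⊥_D C'_{t≤-1}), then t = (C₂[1], C₁), i.e., C'_{t≤0} = C₂[1] and C'_{t≥0} = C₁. Consequently there is at most one t-structure on C' orthogonal to w. -/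
open CategoryTheory CategoryTheory.Limits CategoryTheory.Pretriangulated ZeroObject

universe w' v u

variable (C : Type u) [Category.{v} C] [HasZeroObject C] [HasShift C ℤ]
  [Preadditive C] [∀ n : ℤ, (shiftFunctor C n).Additive] [Pretriangulated C]

/-- A (strictly full) triangulated subcategory, given by its class of objects: it contains
`0`, is closed under isomorphisms, shifts, and extensions. -/
def IsTriangSub (S : C → Prop) : Prop :=
  S (0 : C) ∧ (∀ {X Y : C}, (X ≅ Y) → S X → S Y) ∧
  (∀ (X : C) (n : ℤ), S X → S (X⟦n⟧)) ∧
  (∀ T : Triangle C, (T ∈ distTriang C) → S T.obj₁ → S T.obj₃ → S T.obj₂)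

/-- A t-structure on the full (triangulated) subcategory of the ambient category whose
class of objects is `S`; homological convention, as in `PaperTStructure`. -/
structure RelTStructure (S : C → Prop) where
  le : C → Prop
  ge : C → Prop
  le_sub : ∀ X : C, le X → S X
  ge_sub : ∀ X : C, ge X → S X
  le_iso : ∀ {X Y : C}, (X ≅ Y) → le X → le Y
  ge_iso : ∀ {X Y : C}, (X ≅ Y) → ge X → ge Y
  le_shift : ∀ X : C, le X → le (X⟦(-1 : ℤ)⟧)
  ge_shift : ∀ X : C, ge X → ge (X⟦(1 : ℤ)⟧)
  orth : ∀ (X Y : C), ge X → le Y → ∀ f : X⟦(1 : ℤ)⟧ ⟶ Y, f = 0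
  decomp : ∀ M : C, S M → ∃ (L R : C) (f : L ⟶ M) (g : M ⟶ R) (h : R ⟶ L⟦(1 : ℤ)⟧),
    (Triangle.mk f g h ∈ distTriang C) ∧ ge L ∧ le (R⟦(1 : ℤ)⟧)

/-- A weight structure on the full (triangulated) subcategory of the ambient category whose
class of objects is `S`; homological convention, as in `PaperWeightStructure`. -/
structure RelWeightStructure (S : C → Prop) where
  le : C → Prop
  ge : C → Prop
  le_sub : ∀ X : C, le X → S X
  ge_sub : ∀ X : C, ge X → S X
  le_retract : ∀ (X Y : C), S X → le Y → (∃ (i : X ⟶ Y) (r : Y ⟶ X), i ≫ r = 𝟙 X) → le X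
  ge_retract : ∀ (X Y : C), S X → ge Y → (∃ (i : X ⟶ Y) (r : Y ⟶ X), i ≫ r = 𝟙 X) → ge X
  le_shift : ∀ X : C, le X → le (X⟦(-1 : ℤ)⟧)
  ge_shift : ∀ X : C, ge X → ge (X⟦(1 : ℤ)⟧)
  orth : ∀ (X Y : C), le X → ge Y → ∀ f : X ⟶ Y⟦(1 : ℤ)⟧, f = 0
  decomp : ∀ M : C, S M → ∃ (L R : C) (f : L ⟶ M) (g : M ⟶ R) (h : R ⟶ L⟦(1 : ℤ)⟧),
    (Triangle.mk f g h ∈ distTriang C) ∧ le L ∧ ge (R⟦(-1 : ℤ)⟧)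

/-!
Orthogonality to `w` puts `C'_{t≥0}` inside `C₁` and `C'_{t≤-1}` inside `C₂`. Conversely, take a
`t`-decomposition `L → M → R → L[1]` of an object `M` of `C₁` (resp. of `M = Y[-1]` with `Y ∈ C₂[1]`).
Since `C₁ ⊥ C₂`, the map `M → R` (resp. `L → M`) vanishes, and `Hom(L[1], R) = 0`, so the triangle
forces `R = 0` (resp. `L = 0`). As `C₁` and `C₂` only depend on `w`, so does `t`.
-/

variable {C}

attribute [ext] RelTStructure

namespace CategoryTheory.Pretriangulated

variable {T : Triangle C} (hT : T ∈ distTriang C)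
include hT

lemma isIso_mor₁_of_mor₂_eq_zero (h₂ : T.mor₂ = 0)
    (h : ∀ ψ : T.obj₁⟦(1 : ℤ)⟧ ⟶ T.obj₃, ψ = 0) : IsIso T.mor₁ := by
  obtain ⟨ψ, hψ⟩ := T.yoneda_exact₃ hT (𝟙 T.obj₃) (by rw [h₂, zero_comp])
  refine (T.isZero₃_iff_isIso₁ hT).1 ?_
  rw [IsZero.iff_id_eq_zero, hψ, h ψ, comp_zero]

lemma isIso_mor₂_of_mor₁_eq_zero (h₁ : T.mor₁ = 0)
    (h : ∀ ψ : T.obj₁⟦(1 : ℤ)⟧ ⟶ T.obj₃, ψ = 0) : IsIso T.mor₂ := by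
  obtain ⟨ψ, hψ⟩ := T.coyoneda_exact₁ hT (𝟙 _) (by rw [h₁, Functor.map_zero, comp_zero])
  have hshift : IsZero (T.obj₁⟦(1 : ℤ)⟧) := by
    rw [IsZero.iff_id_eq_zero, hψ, h ψ, zero_comp]
  refine (T.isZero₁_iff_isIso₂ hT).1 ?_
  exact ((shiftFunctor C (-1 : ℤ)).map_isZero hshift).of_iso (shiftShiftNeg T.obj₁ 1).symm

end CategoryTheory.Pretriangulated

namespace RelWeightStructure

variable {S : C → Prop} (w : RelWeightStructure C S) (S' : C → Prop)

/-- `C₁ = (C_{w≤-1})^⊥ ∩ S'`. -/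
def C₁ (Y : C) : Prop :=
  S' Y ∧ ∀ X : C, w.le (X⟦(1 : ℤ)⟧) → ∀ f : X ⟶ Y, f = 0

/-- `C₂ = (C_{w≥0})^⊥ ∩ S'`. -/
def C₂ (Z : C) : Prop :=
  S' Z ∧ ∀ X : C, w.ge X → ∀ f : X ⟶ Z, f = 0

end RelWeightStructure

namespace RelTStructure

variable {S S' : C → Prop} (t : RelTStructure C S')

lemma le_of_le_shift_one {X : C} (h : t.le (X⟦(1 : ℤ)⟧)) : t.le X :=
  t.le_iso (shiftShiftNeg X 1) (t.le_shift _ h)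

variable (w : RelWeightStructure C S)

/-- `C_{w≤0} ⊥ C'_{t≥1}` and `C_{w≥0} ⊥ C'_{t≤-1}`. -/
def IsOrthogonal : Prop :=
  (∀ X Y : C, w.le X → t.ge (Y⟦(-1 : ℤ)⟧) → ∀ f : X ⟶ Y, f = 0) ∧
  (∀ X Y : C, w.ge X → t.le (Y⟦(1 : ℤ)⟧) → ∀ f : X ⟶ Y, f = 0)

variable {t w}

lemma C₁_of_ge (ht : ∀ X Y : C, w.le X → t.ge (Y⟦(-1 : ℤ)⟧) → ∀ f : X ⟶ Y, f = 0)
    {Y : C} (hY : t.ge Y) : w.C₁ S' Y := by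
  refine ⟨t.ge_sub Y hY, fun X hX f => ?_⟩
  rw [← (shiftFunctor C (1 : ℤ)).map_eq_zero_iff]
  exact ht _ _ hX (t.ge_iso (shiftShiftNeg Y 1).symm hY) _

lemma C₂_of_le_shift_one (ht : ∀ X Y : C, w.ge X → t.le (Y⟦(1 : ℤ)⟧) → ∀ f : X ⟶ Y, f = 0)
    {Y : C} (hY : t.le (Y⟦(1 : ℤ)⟧)) : w.C₂ S' Y :=
  ⟨t.le_sub Y (t.le_of_le_shift_one hY), fun X hX f => ht X Y hX hY f⟩

variable (h12 : ∀ Y Z : C, w.C₁ S' Y → w.C₂ S' Z → ∀ f : Y ⟶ Z, f = 0)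
include h12

lemma ge_iff_C₁ (ht : t.IsOrthogonal w) (Y : C) : t.ge Y ↔ w.C₁ S' Y := by
  refine ⟨C₁_of_ge ht.1, fun hY => ?_⟩
  obtain ⟨L, R, f, g, h, hT, hL, hR⟩ := t.decomp Y hY.1
  have hR₂ : w.C₂ S' R := C₂_of_le_shift_one ht.2 hR
  have : IsIso f := isIso_mor₁_of_mor₂_eq_zero hT (h12 Y R hY hR₂ g)
    (h12 _ R (C₁_of_ge ht.1 (t.ge_shift L hL)) hR₂)
  exact t.ge_iso (asIso f) hL

lemma le_iff_C₂_shift (hS' : IsTriangSub C S') (ht : t.IsOrthogonal w) (Y : C) :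
    t.le Y ↔ (S' Y ∧ ∀ X : C, w.ge X → ∀ f : X ⟶ Y⟦(-1 : ℤ)⟧, f = 0) := by
  refine ⟨fun hY => ⟨t.le_sub Y hY,
    (C₂_of_le_shift_one ht.2 (t.le_iso (shiftNegShift Y 1).symm hY)).2⟩, fun ⟨hY, hY₂⟩ => ?_⟩
  have hY' : S' (Y⟦(-1 : ℤ)⟧) := hS'.2.2.1 Y (-1) hY
  obtain ⟨L, R, f, g, h, hT, hL, hR⟩ := t.decomp _ hY'
  have : IsIso g := isIso_mor₂_of_mor₁_eq_zero hT
    (h12 L _ (C₁_of_ge ht.1 hL) ⟨hY', hY₂⟩ f) (t.orth L R hL (t.le_of_le_shift_one hR))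
  exact t.le_iso ((shiftFunctor C (1 : ℤ)).mapIso (asIso g).symm ≪≫ shiftNegShift Y 1) hR

lemma eq_of_isOrthogonal (hS' : IsTriangSub C S') {t' : RelTStructure C S'}
    (ht : t.IsOrthogonal w) (ht' : t'.IsOrthogonal w) : t' = t := by
  ext Y
  · rw [le_iff_C₂_shift h12 hS' ht', le_iff_C₂_shift h12 hS' ht]
  · rw [ge_iff_C₁ h12 ht', ge_iff_C₁ h12 ht]

end RelTStructure

theorem stmt12_general (objC objC' : C → Prop)
    (hC' : IsTriangSub C objC')
    (w : RelWeightStructure C objC) (t : RelTStructure C objC')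
    (h12 : ∀ Y Z : C,
      (objC' Y ∧ ∀ X : C, w.le (X⟦(1 : ℤ)⟧) → ∀ f : X ⟶ Y, f = 0) →
      (objC' Z ∧ ∀ X : C, w.ge X → ∀ f : X ⟶ Z, f = 0) →
      ∀ f : Y ⟶ Z, f = 0)
    (horth1 : ∀ X Y : C, w.le X → t.ge (Y⟦(-1 : ℤ)⟧) → ∀ f : X ⟶ Y, f = 0)
    (horth2 : ∀ X Y : C, w.ge X → t.le (Y⟦(1 : ℤ)⟧) → ∀ f : X ⟶ Y, f = 0) :
    (∀ Y : C, t.le Y ↔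
      (objC' Y ∧ ∀ X : C, w.ge X → ∀ f : X ⟶ Y⟦(-1 : ℤ)⟧, f = 0)) ∧
    (∀ Y : C, t.ge Y ↔
      (objC' Y ∧ ∀ X : C, w.le (X⟦(1 : ℤ)⟧) → ∀ f : X ⟶ Y, f = 0)) ∧
    (∀ t' : RelTStructure C objC',
      (∀ X Y : C, w.le X → t'.ge (Y⟦(-1 : ℤ)⟧) → ∀ f : X ⟶ Y, f = 0) →
      (∀ X Y : C, w.ge X → t'.le (Y⟦(1 : ℤ)⟧) → ∀ f : X ⟶ Y, f = 0) →
      t' = t) :=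
  ⟨t.le_iff_C₂_shift h12 hC' ⟨horth1, horth2⟩, t.ge_iff_C₁ h12 ⟨horth1, horth2⟩,
    fun _ horth1' horth2' => RelTStructure.eq_of_isOrthogonal h12 hC' ⟨horth1, horth2⟩
      ⟨horth1', horth2'⟩⟩

/-- `C`, `C'` full triangulated subcategories of the ambient category `D`
(here the ambient category is the variable `C` of this file, and the subcategories are given
by their object classes `objC`, `objC'`), `w` a weight structure on the subcategory `objC`,
`C₁ = (C_{w≤-1})^{⊥_D} ∩ Obj C'` and `C₂ = (C_{w≥0})^{⊥_D} ∩ Obj C'`.  If `C₁ ⊥ C₂` and a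
t-structure `t` on `objC'` is orthogonal to `w`, then `C'_{t≤0} = C₂[1]` and
`C'_{t≥0} = C₁`; consequently at most one t-structure on `objC'` is orthogonal to `w`. -/
theorem stmt12 (objC objC' : C → Prop)
    (hC : IsTriangSub C objC) (hC' : IsTriangSub C objC')
    (w : RelWeightStructure C objC) (t : RelTStructure C objC')
    (h12 : ∀ Y Z : C,
      (objC' Y ∧ ∀ X : C, w.le (X⟦(1 : ℤ)⟧) → ∀ f : X ⟶ Y, f = 0) →
      (objC' Z ∧ ∀ X : C, w.ge X → ∀ f : X ⟶ Z, f = 0) →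
      ∀ f : Y ⟶ Z, f = 0)
    (horth1 : ∀ X Y : C, w.le X → t.ge (Y⟦(-1 : ℤ)⟧) → ∀ f : X ⟶ Y, f = 0)
    (horth2 : ∀ X Y : C, w.ge X → t.le (Y⟦(1 : ℤ)⟧) → ∀ f : X ⟶ Y, f = 0) :
    (∀ Y : C, t.le Y ↔
      (objC' Y ∧ ∀ X : C, w.ge X → ∀ f : X ⟶ Y⟦(-1 : ℤ)⟧, f = 0)) ∧
    (∀ Y : C, t.ge Y ↔
      (objC' Y ∧ ∀ X : C, w.le (X⟦(1 : ℤ)⟧) → ∀ f : X ⟶ Y, f = 0)) ∧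
    (∀ t' : RelTStructure C objC',
      (∀ X Y : C, w.le X → t'.ge (Y⟦(-1 : ℤ)⟧) → ∀ f : X ⟶ Y, f = 0) →
      (∀ X Y : C, w.ge X → t'.le (Y⟦(1 : ℤ)⟧) → ∀ f : X ⟶ Y, f = 0) →
      t' = t) :=
  stmt12_general objC objC' hC' w t h12 horth1 horth2
end

section
/- Let C be a smashing triangulated category (closed under small coproducts) and let A be an extension-closed class of objects closed under coproducts and closed under the shift [1] (or under [-1]). Then A is retraction-closed in C: any retract of an object of A belongs to A. -/
open CategoryTheory CategoryTheory.Limits CategoryTheory.Pretriangulated ZeroObject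

universe w' v u

variable (C : Type u) [Category.{v} C] [HasZeroObject C] [HasShift C ℤ]
  [Preadditive C] [∀ n : ℤ, (shiftFunctor C n).Additive] [Pretriangulated C]

/-!
If `X` is a retract of `Y`, then `Y ≅ X ⊞ Z` because the cone triangle of the split mono `X ⟶ Y`
has zero third morphism. Eilenberg swindle: `W := ∐ℕ Y ≅ ∐ℕ (X ⊞ Z)` lies in `A` and absorbs `X`,
i.e. `X ⊞ W ≅ W`. Rotating the split triangle `W → W ⊞ X → X → W[1]` (or inverse-rotating
`X → X ⊞ W → W → X[1]`) exhibits `X` as an extension of objects of `A`.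
-/

namespace CategoryTheory.Limits

variable {D : Type*} [Category D] [HasZeroMorphisms D] [HasBinaryBiproducts D]

noncomputable def sigmaBiprodIso {ι : Type*} [HasCoproductsOfShape ι D] (P Q : ι → D) :
    (∐ fun n => P n ⊞ Q n) ≅ (∐ P) ⊞ (∐ Q) where
  hom := Sigma.desc fun n => biprod.map (Sigma.ι P n) (Sigma.ι Q n)
  inv := biprod.desc (Sigma.map fun _ => biprod.inl) (Sigma.map fun _ => biprod.inr)

noncomputable def biprodSigmaConstIso [HasCoproductsOfShape (ULift.{w'} ℕ) D] (X : D) :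
    X ⊞ (∐ fun _ : ULift.{w'} ℕ => X) ≅ ∐ fun _ : ULift.{w'} ℕ => X where
  hom := biprod.desc (Sigma.ι (fun _ => X) ⟨0⟩)
    (Sigma.desc fun n => Sigma.ι (fun _ => X) ⟨n.down + 1⟩)
  inv := Sigma.desc fun
    | ⟨0⟩ => biprod.inl
    | ⟨k + 1⟩ => Sigma.ι (fun _ => X) ⟨k⟩ ≫ biprod.inr
  inv_hom_id := by
    ext ⟨n⟩
    cases n <;> simp

noncomputable def biprodSigmaConstBiprodIso [HasCoproductsOfShape (ULift.{w'} ℕ) D] (X Z : D) :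
    X ⊞ (∐ fun _ : ULift.{w'} ℕ => X ⊞ Z) ≅ ∐ fun _ : ULift.{w'} ℕ => X ⊞ Z :=
  biprod.mapIso (Iso.refl X) (sigmaBiprodIso _ _) ≪≫ (biprod.associator _ _ _).symm ≪≫
    biprod.mapIso (biprodSigmaConstIso X) (Iso.refl _) ≪≫ (sigmaBiprodIso _ _).symm

end CategoryTheory.Limits

namespace CategoryTheory.Pretriangulated

variable {C}

lemma exists_iso_biprod_of_retract {X Y : C} (i : X ⟶ Y) (r : Y ⟶ X) (hir : i ≫ r = 𝟙 X) :
    ∃ Z : C, Nonempty (Y ≅ X ⊞ Z) := by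
  obtain ⟨Z, g, h, hT⟩ := distinguished_cocone_triangle i
  have : Mono i := (IsSplitMono.mk' ⟨r, hir⟩).mono
  obtain ⟨e, -, -⟩ := exists_iso_binaryBiproduct_of_distTriang _ hT
    (Triangle.mor₃_eq_zero_of_mono₁ _ hT this)
  exact ⟨Z, ⟨e⟩⟩

lemma nonempty_biprod_sigmaConst_iso_of_retract [HasCoproductsOfShape (ULift.{w'} ℕ) C]
    {X Y : C} (i : X ⟶ Y) (r : Y ⟶ X) (hir : i ≫ r = 𝟙 X) :
    Nonempty (X ⊞ (∐ fun _ : ULift.{w'} ℕ => Y) ≅ ∐ fun _ : ULift.{w'} ℕ => Y) := by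
  obtain ⟨Z, ⟨e⟩⟩ := exists_iso_biprod_of_retract i r hir
  let eσ : (∐ fun _ : ULift.{w'} ℕ => Y) ≅ ∐ fun _ : ULift.{w'} ℕ => X ⊞ Z :=
    Sigma.mapIso fun _ => e
  exact ⟨biprod.mapIso (Iso.refl X) eσ ≪≫ biprodSigmaConstBiprodIso X Z ≪≫ eσ.symm⟩

end CategoryTheory.Pretriangulated

namespace ExtClosed

variable {C} {A : C → Prop}

lemma of_iso (hA : ExtClosed C A) {U V : C} (e : U ≅ V) (hU : A U) : A V := by
  refine hA.2 (Triangle.mk e.hom (0 : V ⟶ 0) 0) ?_ hU hA.1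
  refine isomorphic_distinguished _ (contractible_distinguished U) _
    (Triangle.isoMk _ _ (Iso.refl U) e.symm (Iso.refl 0) ?_ ?_ ?_) <;>
    simp [Triangle.mk, contractibleTriangle]

lemma mem_of_biprod_iso (hA : ExtClosed C A)
    (hshift : (∀ X : C, A X → A (X⟦(1 : ℤ)⟧)) ∨ (∀ X : C, A X → A (X⟦(-1 : ℤ)⟧)))
    {X W : C} (e : X ⊞ W ≅ W) (hW : A W) : A X := by
  rcases hshift with hs | hs
  · exact hA.2 _ (rot_of_distTriang _ (binaryBiproductTriangle_distinguished W X))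
      (hA.of_iso (biprod.braiding W X ≪≫ e).symm hW) (hs W hW)
  · exact hA.2 _ (inv_rot_of_distTriang _ (binaryBiproductTriangle_distinguished X W))
      (hs W hW) (hA.of_iso e.symm hW)

end ExtClosed

/-- in a triangulated category with all small coproducts, an extension-closed
class `A` that is closed under coproducts and closed under the shift `[1]` (or under `[-1]`)
is retraction-closed. -/
theorem stmt15 [HasCoproducts.{w'} C] (A : C → Prop) (hext : ExtClosed C A)
    (hcoprod : ∀ {ι : Type w'} (X : ι → C), (∀ i, A (X i)) → A (∐ X))
    (hshift : (∀ X : C, A X → A (X⟦(1 : ℤ)⟧)) ∨ (∀ X : C, A X → A (X⟦(-1 : ℤ)⟧))) :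
    RetractClosed C A := by
  rintro X Y hY ⟨i, r, hir⟩
  obtain ⟨e⟩ := Pretriangulated.nonempty_biprod_sigmaConst_iso_of_retract.{w'} i r hir
  exact hext.mem_of_biprod_iso hshift e (hcoprod _ fun _ => hY)
end

section
/- Let t be a t-structure on a triangulated category C and P an object with Hom(P, X) = 0 for all X ∈ C_{t≤-1} ∪ C_{t≥1}. Then the functor Hom_C(P, -) restricted to the heart of t is an exact functor to abelian groups, and H⁰_t(P) is a projective object of the heart. -/
/-!
`Hom(P, -)` is exact on the heart because the long exact `Hom(P, -)`-sequence of a triangle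
`A → B → Z → A⟦1⟧` in the heart has its outer terms `Hom(P, Z⟦-1⟧)` and `Hom(P, A⟦1⟧)` killed by
the hypothesis on `P`. The object `H⁰_t(P)` is the truncation `τ_{≤0} P`, which corepresents
`Hom(P, -)` on `C_{t≤0}`; its maps to `C_{t≤-1}` thus come from maps out of `P`, which vanish,
so it also lies in `C_{t≥0}`.
Projectivity then follows from the exactness of `Hom(P, -) ≅ Hom(H⁰_t(P), -)` on the heart.
-/

open CategoryTheory CategoryTheory.Limits CategoryTheory.Pretriangulated ZeroObject

universe w' v u

variable (C : Type u) [Category.{v} C] [HasZeroObject C] [HasShift C ℤ]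
  [Preadditive C] [∀ n : ℤ, (shiftFunctor C n).Additive] [Pretriangulated C]

namespace CategoryTheory

lemma exists_comp_eq_of_surjective_of_injective {D : Type*} [Category D] {P P₀ B Z : D}
    (π : P ⟶ P₀) (g : B ⟶ Z) (hB : Function.Surjective (fun u : P₀ ⟶ B => π ≫ u))
    (hZ : Function.Injective (fun u : P₀ ⟶ Z => π ≫ u))
    (hg : ∀ z : P ⟶ Z, ∃ b : P ⟶ B, b ≫ g = z) (φ : P₀ ⟶ Z) : ∃ ψ : P₀ ⟶ B, ψ ≫ g = φ := by
  obtain ⟨b, hb⟩ := hg (π ≫ φ)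
  obtain ⟨ψ, rfl⟩ := hB b
  exact ⟨ψ, hZ (by simpa only [Category.assoc] using hb)⟩

lemma bijective_comp_of_isIso {D : Type*} [Category D] {X Y W : D} (e : X ⟶ Y) [IsIso e] :
    Function.Bijective (fun u : Y ⟶ W => e ≫ u) :=
  ⟨fun _ _ h => (cancel_epi e).1 h, fun v => ⟨inv e ≫ v, IsIso.hom_inv_id_assoc e v⟩⟩

end CategoryTheory

section

variable {C}

lemma CategoryTheory.Pretriangulated.bijective_mor₂_comp_of_distTriang {T : Triangle C}
    (hT : T ∈ distTriang C) {X : C}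
    (h₁ : ∀ u : T.obj₁ ⟶ X, u = 0) (h₁' : ∀ u : T.obj₁⟦(1 : ℤ)⟧ ⟶ X, u = 0) :
    Function.Bijective (fun w : T.obj₃ ⟶ X => T.mor₂ ≫ w) := by
  refine ⟨fun u v huv => ?_, fun v => ?_⟩
  · obtain ⟨q, hq⟩ := Triangle.yoneda_exact₃ T hT (u - v) (by
      rw [Preadditive.comp_sub, sub_eq_zero]; exact huv)
    rw [← sub_eq_zero, hq, h₁' q, comp_zero]
  · obtain ⟨u, hu⟩ := Triangle.yoneda_exact₂ T hT v (h₁ _)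
    exact ⟨u, hu.symm⟩

namespace PaperTStructure

variable (t : PaperTStructure C)

lemma le_shift_shift_iff {X : C} (a b : ℤ) (hab : a + b = 0) :
    t.le (X⟦a⟧⟦b⟧) ↔ t.le X :=
  ⟨t.le_iso ((shiftFunctorCompIsoId C a b hab).app X),
    t.le_iso ((shiftFunctorCompIsoId C a b hab).app X).symm⟩

lemma ge_shift_shift_iff {X : C} (a b : ℤ) (hab : a + b = 0) :
    t.ge (X⟦a⟧⟦b⟧) ↔ t.ge X :=
  ⟨t.ge_iso ((shiftFunctorCompIsoId C a b hab).app X),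
    t.ge_iso ((shiftFunctorCompIsoId C a b hab).app X).symm⟩

lemma le_of_le_shift_one {X : C} (hX : t.le (X⟦(1 : ℤ)⟧)) : t.le X :=
  (t.le_shift_shift_iff 1 (-1) rfl).1 (t.le_shift _ hX)

lemma ge_of_forall_hom_eq_zero {M : C}
    (hM : ∀ Y : C, t.le (Y⟦(1 : ℤ)⟧) → ∀ g : M ⟶ Y, g = 0) : t.ge M := by
  obtain ⟨L, R, f, g, h, hT, hL, hR⟩ := t.decomp M
  have hRzero : IsZero R := by
    obtain ⟨w, hw⟩ := Triangle.yoneda_exact₃ _ hT (𝟙 R) (by rw [hM R hR g]; exact zero_comp)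
    rw [IsZero.iff_id_eq_zero, hw, t.orth _ _ hL (t.le_of_le_shift_one hR) w]
    exact comp_zero
  have : IsIso f := (Triangle.isZero₃_iff_isIso₁ _ hT).1 hRzero
  exact t.ge_iso (asIso f) hL

lemma exists_truncLE (M : C) : ∃ (M₀ : C) (π : M ⟶ M₀), t.le M₀ ∧
    ∀ X : C, t.le X → Function.Bijective (fun u : M₀ ⟶ X => π ≫ u) := by
  obtain ⟨L, R, f, g, h, hT, hL, hR⟩ := t.decomp (M⟦(-1 : ℤ)⟧)
  let T := (shiftFunctor (Triangle C) (1 : ℤ)).obj (Triangle.mk f g h)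
  let e : M ≅ T.obj₂ := ((shiftFunctorCompIsoId C (-1 : ℤ) 1 (by omega)).app M).symm
  refine ⟨T.obj₃, e.hom ≫ T.mor₂, hR, fun X hX => ?_⟩
  have hT₂ := bijective_mor₂_comp_of_distTriang (Triangle.shift_distinguished _ hT 1) (X := X)
    (fun _ => t.orth _ _ hL hX _) (fun _ => t.orth _ _ (t.ge_shift _ hL) hX _)
  simp only [Category.assoc]
  exact (bijective_comp_of_isIso e.hom).comp hT₂

/-- `P ∈ P_t = ^⊥(C_{t≤-1} ∪ C_{t≥1})`, where `X ∈ C_{t≤-1}` iff `X⟦1⟧ ∈ C_{t≤0}`. -/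
def HomVanishesOffHeart (P : C) : Prop :=
  ∀ X : C, (t.le (X⟦(1 : ℤ)⟧) ∨ t.ge (X⟦(-1 : ℤ)⟧)) → ∀ f : P ⟶ X, f = 0

namespace HomVanishesOffHeart

variable {t} {P : C} (hP : t.HomVanishesOffHeart P)
include hP

lemma eq_zero_of_le {X : C} (hX : t.le X) (u : P ⟶ X⟦(-1 : ℤ)⟧) : u = 0 :=
  hP _ (Or.inl ((t.le_shift_shift_iff (-1) 1 rfl).2 hX)) u

lemma eq_zero_of_ge {X : C} (hX : t.ge X) (u : P ⟶ X⟦(1 : ℤ)⟧) : u = 0 :=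
  hP _ (Or.inr ((t.ge_shift_shift_iff 1 (-1) rfl).2 hX)) u

lemma eq_zero_of_comp_eq_zero {A B Z : C} {f : A ⟶ B} {g : B ⟶ Z} {h : Z ⟶ A⟦(1 : ℤ)⟧}
    (hT : Triangle.mk f g h ∈ distTriang C) (hZ : t.le Z) (a : P ⟶ A) (ha : a ≫ f = 0) :
    a = 0 := by
  obtain ⟨e, rfl⟩ := Triangle.coyoneda_exact₂ _ (inv_rot_of_distTriang _ hT) a ha
  rw [hP.eq_zero_of_le hZ e]
  exact zero_comp

lemma exists_comp_eq {A B Z : C} {f : A ⟶ B} {g : B ⟶ Z} {h : Z ⟶ A⟦(1 : ℤ)⟧}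
    (hT : Triangle.mk f g h ∈ distTriang C) (hA : t.ge A) (z : P ⟶ Z) :
    ∃ b : P ⟶ B, b ≫ g = z := by
  obtain ⟨b, hb⟩ := Triangle.coyoneda_exact₃ _ hT z (hP.eq_zero_of_ge hA (z ≫ h))
  exact ⟨b, hb.symm⟩

lemma ge_of_injective_comp {P₀ : C} {π : P ⟶ P₀}
    (hπ : ∀ X : C, t.le X → Function.Injective (fun u : P₀ ⟶ X => π ≫ u)) : t.ge P₀ :=
  t.ge_of_forall_hom_eq_zero fun Y hY g =>
    hπ Y (t.le_of_le_shift_one hY) (by simpa using hP Y (Or.inl hY) (π ≫ g))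

end HomVanishesOffHeart

end PaperTStructure

end

/-- let `t` be a t-structure and `P` an object with `Hom(P, X) = 0` for all
`X ∈ C_{t≤-1} ∪ C_{t≥1}`.  Then `Hom(P, -)` restricted to the heart `C_{t≤0} ∩ C_{t≥0}` is
an exact functor to abelian groups (short exact sequences in the heart correspond to
distinguished triangles with all three objects in the heart), and `H⁰_t(P)` — characterized
as an object `P₀` of the heart with a morphism `π : P ⟶ P₀` inducing a bijection
`Hom(P₀, X) ≅ Hom(P, X)` for every `X` in the heart — is a projective object of the heart
(epimorphisms in the heart being the second morphisms of distinguished triangles with all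
three objects in the heart). -/
theorem stmt17 (t : PaperTStructure C) (P : C)
    (hP : ∀ X : C, (t.le (X⟦(1 : ℤ)⟧) ∨ t.ge (X⟦(-1 : ℤ)⟧)) → ∀ f : P ⟶ X, f = 0) :
    (∀ (A B Z : C) (f : A ⟶ B) (g : B ⟶ Z) (h : Z ⟶ A⟦(1 : ℤ)⟧),
      (Triangle.mk f g h ∈ distTriang C) →
      (t.le A ∧ t.ge A) → (t.le B ∧ t.ge B) → (t.le Z ∧ t.ge Z) →
      (∀ a : P ⟶ A, a ≫ f = 0 → a = 0) ∧
      (∀ b : P ⟶ B, b ≫ g = 0 → ∃ a : P ⟶ A, a ≫ f = b) ∧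
      (∀ z : P ⟶ Z, ∃ b : P ⟶ B, b ≫ g = z)) ∧
    (∃ (P₀ : C) (π : P ⟶ P₀), (t.le P₀ ∧ t.ge P₀) ∧
      (∀ X : C, (t.le X ∧ t.ge X) →
        Function.Bijective (fun u : P₀ ⟶ X => π ≫ u)) ∧
      (∀ (A B Z : C) (f : A ⟶ B) (g : B ⟶ Z) (h : Z ⟶ A⟦(1 : ℤ)⟧),
        (Triangle.mk f g h ∈ distTriang C) →
        (t.le A ∧ t.ge A) → (t.le B ∧ t.ge B) → (t.le Z ∧ t.ge Z) →
        ∀ φ : P₀ ⟶ Z, ∃ ψ : P₀ ⟶ B, ψ ≫ g = φ)) := by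
  have hP : t.HomVanishesOffHeart P := hP
  refine ⟨fun A B Z f g h hT hA _ hZ =>
    ⟨hP.eq_zero_of_comp_eq_zero hT hZ.1,
      fun b hb => (Triangle.coyoneda_exact₂ _ hT b hb).imp fun _ ha => ha.symm,
      hP.exists_comp_eq hT hA.2⟩, ?_⟩
  obtain ⟨P₀, π, hle, hπ⟩ := t.exists_truncLE P
  refine ⟨P₀, π, ⟨hle, hP.ge_of_injective_comp fun X hX => (hπ X hX).1⟩,
    fun X hX => hπ X hX.1, fun A B Z f g h hT hA hB hZ φ => ?_⟩
  exact exists_comp_eq_of_surjective_of_injective π g (hπ B hB.1).2 (hπ Z hZ.1).1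
    (hP.exists_comp_eq hT hA.2) φ
end
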